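/- Let U ⊆ ℝ³ be open, x₀ ∈ ℝ³, and let E = (E_ij)_{1≤i,j≤3} be a symmetric matrix field of smooth real-valued functions on U. Define the Frank tensor ∂̄_jω_k := ε_kpq ∂_p E_qj, the Burgers tensor ∂̄_j b_k := E_kj + ε_kpq (x_p − x_{0p}) ∂̄_jω_q, and the incompatibility η_ik := ε_ipm ε_kqn ∂_p∂_q E_mn (repeated indices summed over {1,2,3}, ε the Levi-Civita symbol). Then on U, for all i, k: (a) ε_ilj ∂_l (∂̄_jω_k) = η_ik, and (b) ε_ilj ∂_l (∂̄_j b_k) = ε_kpq (x_p − x_{0p}) η_iq. -/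

import Mathlib

open MeasureTheory Real

/-- Partial derivative in the `i`-th coordinate direction of a function on `ℝ³`. -/
noncomputable def pd3 (i : Fin 3) (f : EuclideanSpace ℝ (Fin 3) → ℝ) :
    EuclideanSpace ℝ (Fin 3) → ℝ :=
  fun x => fderiv ℝ f x (EuclideanSpace.single i 1)

/-- The Levi-Civita symbol `ε_ijk` on `{0,1,2}`. -/
noncomputable def lc (i j k : Fin 3) : ℝ :=
  (((j : ℕ) : ℝ) - ((i : ℕ) : ℝ)) * (((k : ℕ) : ℝ) - ((j : ℕ) : ℝ))
    * (((k : ℕ) : ℝ) - ((i : ℕ) : ℝ)) / 2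

/-- The Frank tensor `∂̄_j ω_k := ε_kpq ∂_p E_qj`. -/
noncomputable def frank (Em : Fin 3 → Fin 3 → EuclideanSpace ℝ (Fin 3) → ℝ)
    (j k : Fin 3) : EuclideanSpace ℝ (Fin 3) → ℝ :=
  fun y => ∑ p, ∑ q, lc k p q * pd3 p (Em q j) y

/-- The Burgers tensor `∂̄_j b_k := E_kj + ε_kpq (x_p − x₀_p) ∂̄_j ω_q`. -/
noncomputable def burg (x₀ : EuclideanSpace ℝ (Fin 3))
    (Em : Fin 3 → Fin 3 → EuclideanSpace ℝ (Fin 3) → ℝ)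
    (j k : Fin 3) : EuclideanSpace ℝ (Fin 3) → ℝ :=
  fun y => Em k j y + ∑ p, ∑ q, lc k p q * (y p - x₀ p) * frank Em j q y

/-- The incompatibility tensor `η_ik := ε_ipm ε_kqn ∂_p ∂_q E_mn`. -/
noncomputable def eta (Em : Fin 3 → Fin 3 → EuclideanSpace ℝ (Fin 3) → ℝ)
    (i k : Fin 3) : EuclideanSpace ℝ (Fin 3) → ℝ :=
  fun x => ∑ p, ∑ m, ∑ q, ∑ n, lc i p m * lc k q n * pd3 p (pd3 q (Em m n)) x

/-!
Both identities are pointwise tensor algebra once the derivative is moved past the constant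
Levi-Civita weights. For the Frank tensor, `ε_ilj ∂_l ∂̄_jω_k = ε_ilj ε_kpq ∂_l ∂_p E_qj` is `η_ik`
after renaming indices and using `E_qj = E_jq`. For the Burgers tensor, the product rule on the
moment term gives the moment of `curl ∂̄ω` plus `ε_ilj ε_klq ∂̄_jω_q`; the ε-δ identity turns the
latter into `ε_ilj (∂_k E_lj - ∂_l E_kj)`, which cancels `ε_ilj ∂_l E_kj` and leaves
`ε_ilj ∂_k E_lj`, zero because `E` is symmetric.
-/

open Finset

theorem lc_swap_right (i j k : Fin 3) : lc i k j = -lc i j k := by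
  unfold lc; ring

theorem sum_lc_mul_lc (k l p r : Fin 3) :
    ∑ q, lc k l q * lc q p r
      = (if k = p ∧ l = r then 1 else 0) - (if k = r ∧ l = p then 1 else 0) := by
  fin_cases k <;> fin_cases l <;> fin_cases p <;> fin_cases r <;>
    norm_num [Fin.sum_univ_three, lc]

theorem sum_lc_mul_eq_zero_of_symm (i : Fin 3) {T : Fin 3 → Fin 3 → ℝ}
    (hT : ∀ a b, T a b = T b a) : ∑ l, ∑ j, lc i l j * T l j = 0 := by
  have h : ∑ l, ∑ j, lc i l j * T l j = -∑ l, ∑ j, lc i l j * T l j := by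
    conv_lhs => rw [sum_comm]
    simp only [← sum_neg_distrib]
    refine sum_congr rfl fun j _ => sum_congr rfl fun l _ => ?_
    rw [lc_swap_right i j l, hT l j]; ring
  linarith

theorem sum_lc_mul_frank (Em : Fin 3 → Fin 3 → EuclideanSpace ℝ (Fin 3) → ℝ)
    (j k l : Fin 3) (x : EuclideanSpace ℝ (Fin 3)) :
    ∑ q, lc k l q * frank Em j q x = pd3 k (Em l j) x - pd3 l (Em k j) x := by
  calc ∑ q, lc k l q * frank Em j q x
      = ∑ p, ∑ r, (∑ q, lc k l q * lc q p r) * pd3 p (Em r j) x := by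
        simp only [frank, mul_sum, sum_mul, mul_assoc]
        rw [sum_comm]; exact sum_congr rfl fun _ _ => sum_comm
    _ = pd3 k (Em l j) x - pd3 l (Em k j) x := by
        simp [sum_lc_mul_lc, sub_mul, ite_and]

section Calculus

variable {x : EuclideanSpace ℝ (Fin 3)} {f g : EuclideanSpace ℝ (Fin 3) → ℝ} {l : Fin 3}

theorem pd3_add (hf : DifferentiableAt ℝ f x) (hg : DifferentiableAt ℝ g x) :
    pd3 l (fun y => f y + g y) x = pd3 l f x + pd3 l g x := by
  simp [pd3, fderiv_fun_add hf hg]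

theorem pd3_mul (hf : DifferentiableAt ℝ f x) (hg : DifferentiableAt ℝ g x) :
    pd3 l (fun y => f y * g y) x = pd3 l f x * g x + f x * pd3 l g x := by
  simp [pd3, fderiv_fun_mul hf hg]; ring

theorem pd3_sum_sum_const_mul {F : Fin 3 → Fin 3 → EuclideanSpace ℝ (Fin 3) → ℝ}
    (c : Fin 3 → Fin 3 → ℝ) (hF : ∀ p q, DifferentiableAt ℝ (F p q) x) :
    pd3 l (fun y => ∑ p, ∑ q, c p q * F p q y) x = ∑ p, ∑ q, c p q * pd3 l (F p q) x := by
  have hF' : ∀ p q, DifferentiableAt ℝ (fun y => c p q * F p q y) x :=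
    fun p q => (hF p q).const_mul _
  simp [pd3, fderiv_fun_sum fun p _ => DifferentiableAt.fun_sum fun q _ => hF' p q,
    fderiv_fun_sum fun q _ => hF' _ q, fderiv_const_mul (hF _ _)]

theorem pd3_coord_sub (p : Fin 3) (c : ℝ) :
    pd3 l (fun y => y p - c) x = if p = l then 1 else 0 := by
  rw [pd3, fderiv_sub_const, (PiLp.hasFDerivAt_apply 2 x p).fderiv]
  simp [PiLp.single_apply]

end Calculus

section Smooth

variable {U : Set (EuclideanSpace ℝ (Fin 3))} {x : EuclideanSpace ℝ (Fin 3)}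

theorem ContDiffOn.differentiableAt_pd3 {f : EuclideanSpace ℝ (Fin 3) → ℝ} (hU : IsOpen U)
    (hf : ContDiffOn ℝ 2 f U) (hx : x ∈ U) (p : Fin 3) : DifferentiableAt ℝ (pd3 p f) x :=
  (((hf.fderiv_of_isOpen hU (m := 1) (by norm_num)).clm_apply contDiffOn_const).contDiffAt
    (hU.mem_nhds hx)).differentiableAt (by norm_num)

variable {Em : Fin 3 → Fin 3 → EuclideanSpace ℝ (Fin 3) → ℝ}

theorem differentiableAt_frank (hU : IsOpen U) (hE : ∀ i j, ContDiffOn ℝ 2 (Em i j) U)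
    (hx : x ∈ U) (j k : Fin 3) : DifferentiableAt ℝ (frank Em j k) x :=
  DifferentiableAt.fun_sum fun p _ => DifferentiableAt.fun_sum fun q _ =>
    ((hE q j).differentiableAt_pd3 hU hx p).const_mul _

theorem pd3_frank (hU : IsOpen U) (hE : ∀ i j, ContDiffOn ℝ 2 (Em i j) U) (hx : x ∈ U)
    (l j k : Fin 3) :
    pd3 l (frank Em j k) x = ∑ p, ∑ q, lc k p q * pd3 l (pd3 p (Em q j)) x :=
  pd3_sum_sum_const_mul (F := fun p q => pd3 p (Em q j)) _
    fun p q => (hE q j).differentiableAt_pd3 hU hx p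

theorem curl_frank (hU : IsOpen U) (hE : ∀ i j, ContDiffOn ℝ 2 (Em i j) U)
    (hsym : ∀ i j, Em i j = Em j i) (hx : x ∈ U) (i k : Fin 3) :
    ∑ l, ∑ j, lc i l j * pd3 l (frank Em j k) x = eta Em i k x := by
  simp only [pd3_frank hU hE hx, eta, mul_sum]
  refine sum_congr rfl fun l _ => sum_congr rfl fun j _ =>
    sum_congr rfl fun p _ => sum_congr rfl fun q _ => ?_
  rw [hsym q j]; ring

theorem pd3_burg (hU : IsOpen U) (hE : ∀ i j, ContDiffOn ℝ 2 (Em i j) U) (hx : x ∈ U)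
    (x₀ : EuclideanSpace ℝ (Fin 3)) (l j k : Fin 3) :
    pd3 l (burg x₀ Em j k) x = pd3 l (Em k j) x + ∑ q, lc k l q * frank Em j q x
      + ∑ p, ∑ q, lc k p q * ((x p - x₀ p) * pd3 l (frank Em j q) x) := by
  have hmoment : ∀ p q, DifferentiableAt ℝ (fun y => (y p - x₀ p) * frank Em j q y) x :=
    fun p q => ((PiLp.hasFDerivAt_apply 2 x p).differentiableAt.sub_const _).mul
      (differentiableAt_frank hU hE hx j q)
  unfold burg
  simp only [mul_assoc]
  rw [pd3_add (((hE k j).contDiffAt (hU.mem_nhds hx)).differentiableAt (by norm_num))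
    (DifferentiableAt.fun_sum fun p _ => DifferentiableAt.fun_sum fun q _ =>
      (hmoment p q).const_mul _), pd3_sum_sum_const_mul _ hmoment, add_assoc]
  simp only [pd3_mul ((PiLp.hasFDerivAt_apply 2 x _).differentiableAt.sub_const _)
    (differentiableAt_frank hU hE hx j _), pd3_coord_sub, mul_add, sum_add_distrib]
  simp

theorem curl_burg (hU : IsOpen U) (hE : ∀ i j, ContDiffOn ℝ 2 (Em i j) U)
    (hsym : ∀ i j, Em i j = Em j i) (hx : x ∈ U) (x₀ : EuclideanSpace ℝ (Fin 3)) (i k : Fin 3) :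
    ∑ l, ∑ j, lc i l j * pd3 l (burg x₀ Em j k) x
      = ∑ p, ∑ q, lc k p q * (x p - x₀ p) * eta Em i q x := by
  have hcancel : ∀ l j, pd3 l (Em k j) x + ∑ q, lc k l q * frank Em j q x = pd3 k (Em l j) x :=
    fun l j => by rw [sum_lc_mul_frank]; ring
  have hsym_pd3 : ∑ l, ∑ j, lc i l j * pd3 k (Em l j) x = 0 :=
    sum_lc_mul_eq_zero_of_symm i fun l j => by rw [hsym]
  calc ∑ l, ∑ j, lc i l j * pd3 l (burg x₀ Em j k) x
      = ∑ l, ∑ j, ∑ p, ∑ q,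
          lc i l j * (lc k p q * ((x p - x₀ p) * pd3 l (frank Em j q) x)) := by
        simp only [pd3_burg hU hE hx, hcancel, mul_add, sum_add_distrib, hsym_pd3, zero_add,
          mul_sum]
    _ = ∑ p, ∑ q, ∑ l, ∑ j,
          lc i l j * (lc k p q * ((x p - x₀ p) * pd3 l (frank Em j q) x)) :=
        (sum_congr rfl fun _ _ => sum_comm.trans (sum_congr rfl fun _ _ => sum_comm)).trans
          (sum_comm.trans (sum_congr rfl fun _ _ => sum_comm))
    _ = ∑ p, ∑ q, lc k p q * (x p - x₀ p) * eta Em i q x := by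
        simp only [← curl_frank hU hE hsym hx, mul_sum]
        exact sum_congr rfl fun p _ => sum_congr rfl fun q _ => sum_congr rfl fun l _ =>
          sum_congr rfl fun j _ => by ring

end Smooth

/-- **Theorem 1.7 of the paper:** the curl of the Frank tensor is the incompatibility
tensor, and the curl of the Burgers tensor is the moment of incompatibility about the
reference point `x₀`. -/
theorem curl_frank_and_burgers (U : Set (EuclideanSpace ℝ (Fin 3))) (hU : IsOpen U)
    (x₀ : EuclideanSpace ℝ (Fin 3))
    (Em : Fin 3 → Fin 3 → EuclideanSpace ℝ (Fin 3) → ℝ)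
    (hE : ∀ i j, ContDiffOn ℝ (⊤ : ℕ∞) (Em i j) U)
    (hsym : ∀ i j, Em i j = Em j i) :
    (∀ x ∈ U, ∀ i k,
      (∑ l, ∑ j, lc i l j * pd3 l (frank Em j k) x) = eta Em i k x) ∧
    (∀ x ∈ U, ∀ i k,
      (∑ l, ∑ j, lc i l j * pd3 l (burg x₀ Em j k) x)
        = ∑ p, ∑ q, lc k p q * (x p - x₀ p) * eta Em i q x) := by
  have hE₂ : ∀ i j, ContDiffOn ℝ 2 (Em i j) U :=
    fun i j => (hE i j).of_le (WithTop.coe_le_coe.mpr le_top)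
  exact ⟨fun x hx => curl_frank hU hE₂ hsym hx, fun x hx => curl_burg hU hE₂ hsym hx x₀⟩
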